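/- Let β₀,…,β_d > 0 with β = Σ_{j=0}^d β_j. Then Σ_{j=0}^d β_j ψ(β_j) − β ψ(β) − d < (Σ_{j=0}^d β_j log β_j − β log β) − d/2 + 1/(12β), where ψ is the digamma function. -/

import Mathlib

/-!
Convexity of `log ∘ Gamma` traps `ψ` between consecutive secant slopes, which by
`Γ(z + 1) = z Γ(z)` are logarithms: `log z ≤ ψ(z + 1)` and `ψ(z) ≤ log z`. The lower
bound gives `β ψ(β) ≥ β log β - 1`. For the upper bound `ψ(z + 1) ≤ log z + 1/(2z)`, the
trapezoid estimate for `∫ dt/t` makes `ψ(z + 1) - log z - 1/(2z)` nondecreasing under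
`z ↦ z + 1`, while the crude bound `ψ ≤ log` forces it to be `≤ 0` in the limit; hence
`β ψ(β) ≤ β log β - 1/2`. Summing, the theorem holds with room to spare once `d ≥ 1`,
and trivially for `d = 0`.
-/

/-- The digamma function: the logarithmic derivative of the Gamma function. -/
noncomputable def digamma (z : ℝ) : ℝ := deriv (fun x => Real.log (Real.Gamma x)) z

open Real Filter

lemma differentiableAt_log_Gamma {z : ℝ} (hz : 0 < z) :
    DifferentiableAt ℝ (fun x => log (Gamma x)) z :=
  (differentiableAt_Gamma fun m => by linarith [(m.cast_nonneg : (0 : ℝ) ≤ m)]).log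
    (Gamma_pos_of_pos hz).ne'

lemma log_Gamma_add_one {z : ℝ} (hz : 0 < z) :
    log (Gamma (z + 1)) = log z + log (Gamma z) := by
  rw [Gamma_add_one hz.ne', log_mul hz.ne' (Gamma_pos_of_pos hz).ne']

lemma digamma_add_one {z : ℝ} (hz : 0 < z) : digamma (z + 1) = digamma z + z⁻¹ := by
  have hshift : (fun x => log (Gamma (x + 1))) =ᶠ[nhds z] fun x => log x + log (Gamma x) := by
    filter_upwards [eventually_gt_nhds hz] with x hx using log_Gamma_add_one hx
  rw [digamma, ← deriv_comp_add_const, hshift.deriv_eq,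
    deriv_fun_add (differentiableAt_log hz.ne') (differentiableAt_log_Gamma hz), deriv_log,
    add_comm, digamma]

lemma slope_log_Gamma {z : ℝ} (hz : 0 < z) : slope (log ∘ Gamma) z (z + 1) = log z := by
  rw [slope_def_field, Function.comp_apply, Function.comp_apply, log_Gamma_add_one hz]
  ring

lemma log_le_digamma_add_one {z : ℝ} (hz : 0 < z) : log z ≤ digamma (z + 1) :=
  slope_log_Gamma hz ▸ convexOn_log_Gamma.slope_le_deriv hz (by simp; linarith) (by linarith)
    (differentiableAt_log_Gamma (by linarith))

lemma digamma_le_log {z : ℝ} (hz : 0 < z) : digamma z ≤ log z :=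
  slope_log_Gamma hz ▸ convexOn_log_Gamma.deriv_le_slope hz (by simp; linarith) (by linarith)
    (differentiableAt_log_Gamma hz)

lemma log_lt_sub_inv_div_two {x : ℝ} (hx : 1 < x) : log x < (x - x⁻¹) / 2 :=
  sinh_log (by linarith) ▸ self_lt_sinh_iff.mpr (log_pos hx)

lemma log_add_one_sub_log_lt {z : ℝ} (hz : 0 < z) :
    log (z + 1) - log z < (z⁻¹ + (z + 1)⁻¹) / 2 := by
  have h := log_lt_sub_inv_div_two (x := (z + 1) / z) (by rw [lt_div_iff₀ hz]; linarith)
  rw [log_div (by linarith) hz.ne'] at h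
  convert h using 1
  field_simp
  ring

/-- The remainder in `ψ(z + 1) = log z + 1/(2z) + O(1/z²)`. -/
noncomputable def digammaRemainder (z : ℝ) : ℝ := digamma (z + 1) - log z - z⁻¹ / 2

lemma digammaRemainder_le_add_one {z : ℝ} (hz : 0 < z) :
    digammaRemainder z ≤ digammaRemainder (z + 1) := by
  have h := log_add_one_sub_log_lt hz
  rw [digammaRemainder, digammaRemainder, digamma_add_one (z := z + 1) (by linarith)]
  linarith

lemma digammaRemainder_le_add_nat {z : ℝ} (hz : 0 < z) (n : ℕ) :
    digammaRemainder z ≤ digammaRemainder (z + n) := by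
  induction n with
  | zero => simp
  | succ n ih =>
    push_cast
    rw [← add_assoc]
    exact ih.trans (digammaRemainder_le_add_one (by positivity))

lemma digammaRemainder_lt {z : ℝ} (hz : 0 < z) : digammaRemainder z < (z + 1)⁻¹ / 2 := by
  have hψ := digamma_le_log (z := z + 1) (by linarith)
  have hlog := log_add_one_sub_log_lt hz
  rw [digammaRemainder]
  linarith

lemma digammaRemainder_nonpos {z : ℝ} (hz : 0 < z) : digammaRemainder z ≤ 0 := by
  have hlim : Tendsto (fun n : ℕ => (z + n + 1)⁻¹ / 2) atTop (nhds 0) := by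
    have h : Tendsto (fun n : ℕ => z + n + 1) atTop atTop :=
      tendsto_atTop_add_const_right _ _
        (tendsto_atTop_add_const_left _ _ tendsto_natCast_atTop_atTop)
    simpa using h.inv_tendsto_atTop.div_const 2
  exact ge_of_tendsto' hlim fun n =>
    (digammaRemainder_le_add_nat hz n).trans (digammaRemainder_lt (by positivity)).le

lemma digamma_add_one_le {z : ℝ} (hz : 0 < z) : digamma (z + 1) ≤ log z + z⁻¹ / 2 := by
  have := digammaRemainder_nonpos hz
  rw [digammaRemainder] at this
  linarith

lemma mul_digamma_le {z : ℝ} (hz : 0 < z) : z * digamma z ≤ z * log z - 1 / 2 := by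
  have h := mul_le_mul_of_nonneg_left (digamma_add_one_le hz) hz.le
  rw [digamma_add_one hz, mul_add, mul_add, mul_div_assoc', mul_inv_cancel₀ hz.ne'] at h
  linarith

lemma mul_log_sub_one_le_mul_digamma {z : ℝ} (hz : 0 < z) : z * log z - 1 ≤ z * digamma z := by
  have h := mul_le_mul_of_nonneg_left (log_le_digamma_add_one hz) hz.le
  rw [digamma_add_one hz, mul_add, mul_inv_cancel₀ hz.ne'] at h
  linarith

theorem digamma_sum_bound (d : ℕ) (β : Fin (d + 1) → ℝ) (hβ : ∀ j, 0 < β j) :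
    ∑ j, β j * digamma (β j) - (∑ j, β j) * digamma (∑ j, β j) - d <
      (∑ j, β j * Real.log (β j) - (∑ j, β j) * Real.log (∑ j, β j)) -
        d / 2 + 1 / (12 * ∑ j, β j) := by
  have hS : 0 < ∑ j, β j := Finset.sum_pos (fun j _ => hβ j) Finset.univ_nonempty
  have hrem : 0 < 1 / (12 * ∑ j, β j) := by positivity
  rcases Nat.eq_zero_or_pos d with rfl | hd
  · simp only [Nat.reduceAdd, Fin.sum_univ_one] at hrem ⊢
    push_cast
    linarith
  have hsum : ∑ j, β j * digamma (β j) ≤ ∑ j, β j * log (β j) - (d + 1) / 2 :=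
    calc ∑ j, β j * digamma (β j) ≤ ∑ j, (β j * log (β j) - 1 / 2) :=
          Finset.sum_le_sum fun j _ => mul_digamma_le (hβ j)
      _ = ∑ j, β j * log (β j) - (d + 1) / 2 := by
          rw [Finset.sum_sub_distrib, Finset.sum_const, Finset.card_univ, Fintype.card_fin,
            nsmul_eq_mul]
          push_cast
          ring
  have htotal := mul_log_sub_one_le_mul_digamma hS
  have hd1 : (1 : ℝ) ≤ d := by exact_mod_cast hd
  linarith
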